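/- Let E and E' be traces of lengths i and i' respectively, in which every event occurs at most once, and suppose that for every thread t the projections of E and E' onto t are equal. Then there exists a bijection π from {1,…,i} to {1,…,i'} such that for every j ≤ i, the event at position j in E equals the event at position π(j) in E'. -/

import Mathlib

/-!
An event occurs as often in a trace as in the projection onto its own thread, so equal
projections make `E` and `E'` permutations of each other. Any permutation of lists is realised by a
bijection of positions: for each event, the positions holding it in `E` and in `E'` are equally
many, and these fibrewise bijections glue together.
-/

/-- Projection of a trace onto thread `t`. -/
def proj {T A : Type} [DecidableEq T] (E : List (T × A)) (t : T) : List (T × A) :=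
  E.filter (fun e => e.1 = t)

namespace List

theorem perm_of_forall_filter_eq {α β : Type*} [DecidableEq β] (f : α → β) {l l' : List α}
    (h : ∀ b, l.filter (fun a => f a = b) = l'.filter (fun a => f a = b)) : l ~ l' := by
  classical
  refine perm_iff_count.mpr fun a => ?_
  rw [← count_filter (p := fun x => decide (f x = f a)) (by simp), h (f a), count_filter (by simp)]

theorem card_get_fiber_eq_count {α : Type*} [DecidableEq α] (l : List α) (a : α) :
    Nat.card {j // l.get j = a} = l.count a := by
  rw [Nat.card_eq_fintype_card, Fintype.card_subtype]
  exact Fin.card_filter_univ_eq_vector_get_eq_count a ⟨l, rfl⟩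

theorem Perm.exists_equiv_get {α : Type*} {l l' : List α} (h : l ~ l') :
    ∃ π : Fin l.length ≃ Fin l'.length, ∀ j, l.get j = l'.get (π j) := by
  classical
  have hfiber (a : α) : Nonempty ({j // l.get j = a} ≃ {j // l'.get j = a}) := by
    rw [← Finite.card_eq, card_get_fiber_eq_count, card_get_fiber_eq_count, h.count_eq]
  exact ⟨Equiv.ofFiberEquiv fun a => (hfiber a).some, fun j => (Equiv.ofFiberEquiv_map _ j).symm⟩

end List

theorem exists_bijection_of_proj_eq_general {T A : Type} [DecidableEq T]
    (E E' : List (T × A))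
    (h : ∀ t : T, proj E t = proj E' t) :
    ∃ π : Fin E.length ≃ Fin E'.length, ∀ j : Fin E.length, E.get j = E'.get (π j) :=
  (List.perm_of_forall_filter_eq Prod.fst h).exists_equiv_get

/-- For duplicate-free traces with equal per-thread projections there is a
bijection between positions matching equal events. -/
theorem exists_bijection_of_proj_eq {T A : Type} [DecidableEq T]
    (E E' : List (T × A)) (hE : E.Nodup) (hE' : E'.Nodup)
    (h : ∀ t : T, proj E t = proj E' t) :
    ∃ π : Fin E.length ≃ Fin E'.length, ∀ j : Fin E.length, E.get j = E'.get (π j) :=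
  exists_bijection_of_proj_eq_general E E' h
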